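/- arXiv:math/0407483 — 8 statements merged into one kernel-verified Lean document; each statement's English description precedes it below -/
import Mathlib

section
/- Let q be a nonzero complex number and λ = q − q⁻¹. The 4×4 matrix R(q) = [[q,0,0,0],[0,1,0,0],[0,λ,1,0],[0,0,0,−q⁻¹]] (the exotic solution, i.e. the matrix (5) of the paper with ζ = −q⁻¹) satisfies the quantum Yang–Baxter equation R₁₂R₁₃R₂₃ = R₂₃R₁₃R₁₂, where R₁₂ = R ⊗ I₂, R₂₃ = I₂ ⊗ R, and R₁₃ = (P ⊗ I₂)(I₂ ⊗ R)(P ⊗ I₂) are 8×8 complex matrices, P being the 4×4 swap matrix. -/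
open Matrix Kronecker

/-- The matrix (5) of the paper: 4×4 matrix over ℂ indexed by `Fin 2 × Fin 2`
(basis ordering e₁⊗e₁, e₁⊗e₂, e₂⊗e₁, e₂⊗e₂), with parameter `ζ` in the lower
right corner and `λ = q - q⁻¹`. -/
noncomputable def Rmat (q ζ : ℂ) : Matrix (Fin 2 × Fin 2) (Fin 2 × Fin 2) ℂ :=
  Matrix.of fun p r =>
    if p = ((0 : Fin 2), (0 : Fin 2)) ∧ r = ((0 : Fin 2), (0 : Fin 2)) then q
    else if p = ((0 : Fin 2), (1 : Fin 2)) ∧ r = ((0 : Fin 2), (1 : Fin 2)) then 1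
    else if p = ((1 : Fin 2), (0 : Fin 2)) ∧ r = ((0 : Fin 2), (1 : Fin 2)) then q - q⁻¹
    else if p = ((1 : Fin 2), (0 : Fin 2)) ∧ r = ((1 : Fin 2), (0 : Fin 2)) then 1
    else if p = ((1 : Fin 2), (1 : Fin 2)) ∧ r = ((1 : Fin 2), (1 : Fin 2)) then ζ
    else 0

/-- The 4×4 swap (flip) matrix `P(u ⊗ v) = v ⊗ u` on ℂ² ⊗ ℂ². -/
def Pswap : Matrix (Fin 2 × Fin 2) (Fin 2 × Fin 2) ℂ :=
  Matrix.of fun p r => if p.1 = r.2 ∧ p.2 = r.1 then 1 else 0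

/-- `A ⊗ I₂` as an 8×8 matrix, indexed by `Fin 2 × Fin 2 × Fin 2`. -/
noncomputable def lift12 (A : Matrix (Fin 2 × Fin 2) (Fin 2 × Fin 2) ℂ) :
    Matrix (Fin 2 × Fin 2 × Fin 2) (Fin 2 × Fin 2 × Fin 2) ℂ :=
  Matrix.reindex (Equiv.prodAssoc (Fin 2) (Fin 2) (Fin 2))
    (Equiv.prodAssoc (Fin 2) (Fin 2) (Fin 2)) (A ⊗ₖ (1 : Matrix (Fin 2) (Fin 2) ℂ))

/-- `I₂ ⊗ A` as an 8×8 matrix, indexed by `Fin 2 × Fin 2 × Fin 2`. -/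
noncomputable def lift23 (A : Matrix (Fin 2 × Fin 2) (Fin 2 × Fin 2) ℂ) :
    Matrix (Fin 2 × Fin 2 × Fin 2) (Fin 2 × Fin 2 × Fin 2) ℂ :=
  (1 : Matrix (Fin 2) (Fin 2) ℂ) ⊗ₖ A

/-- `A₁₃ = (P ⊗ I₂) (I₂ ⊗ A) (P ⊗ I₂)`. -/
noncomputable def lift13 (A : Matrix (Fin 2 × Fin 2) (Fin 2 × Fin 2) ℂ) :
    Matrix (Fin 2 × Fin 2 × Fin 2) (Fin 2 × Fin 2 × Fin 2) ℂ :=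
  lift12 Pswap * lift23 A * lift12 Pswap

lemma lift12_apply (A : Matrix (Fin 2 × Fin 2) (Fin 2 × Fin 2) ℂ) (i j k l m n : Fin 2) :
    lift12 A (i, j, k) (l, m, n) = if k = n then A (i, j) (l, m) else 0 := by
  simp [lift12, Equiv.prodAssoc, Matrix.one_apply, mul_ite]

lemma lift23_apply (A : Matrix (Fin 2 × Fin 2) (Fin 2 × Fin 2) ℂ) (i j k l m n : Fin 2) :
    lift23 A (i, j, k) (l, m, n) = if i = l then A (j, k) (m, n) else 0 := by
  simp [lift23, Matrix.one_apply, ite_mul]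

lemma lift13_apply (A : Matrix (Fin 2 × Fin 2) (Fin 2 × Fin 2) ℂ) (i j k l m n : Fin 2) :
    lift13 A (i, j, k) (l, m, n) = if j = m then A (i, k) (l, n) else 0 := by
  simp only [lift13, Matrix.mul_apply, Fintype.sum_prod_type, lift12_apply, lift23_apply,
    Pswap, Matrix.of_apply, ite_and, mul_ite, ite_mul, mul_zero, zero_mul, mul_one, one_mul,
    Finset.sum_ite_eq, Finset.sum_ite_eq', Finset.mem_univ, if_true, Finset.sum_ite_irrel,
    Finset.sum_const_zero]

set_option maxHeartbeats 4000000 in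
/-- The exotic R-matrix (matrix (5) with ζ = -q⁻¹) satisfies the quantum
Yang–Baxter equation R₁₂ R₁₃ R₂₃ = R₂₃ R₁₃ R₁₂. -/
theorem exotic_R_satisfies_QYBE (q : ℂ) (hq : q ≠ 0) :
    lift12 (Rmat q (-q⁻¹)) * lift13 (Rmat q (-q⁻¹)) * lift23 (Rmat q (-q⁻¹)) =
      lift23 (Rmat q (-q⁻¹)) * lift13 (Rmat q (-q⁻¹)) * lift12 (Rmat q (-q⁻¹)) := by
  ext ⟨i, j, k⟩ ⟨l, m, n⟩
  simp only [Matrix.mul_apply, Fintype.sum_prod_type, Fin.sum_univ_two,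
    lift12_apply, lift23_apply, lift13_apply]
  fin_cases i <;> fin_cases j <;> fin_cases k <;> fin_cases l <;> fin_cases m <;> fin_cases n <;>
  · simp +decide [Rmat]
    try field_simp
    try ring
end

section
/- Let A be an associative ℂ-algebra, let ε ∈ A be a central element with ε² = 0 (a nilpotent contraction parameter), let v ∈ ℂ, and let p, r̂ ∈ A. Set r = ε·r̂ and q = 1 + ε·v (so q = exp(εv) since ε² = 0). Then the Cartesian quantum-plane relation (1 + q)·(r·p − p·r) = i·(q − 1)·(r² + p²) holds if and only if ε·(2·(r̂·p − p·r̂) − i·v·p²) = 0. In particular, it holds whenever r̂ and p satisfy the h-plane relation r̂·p − p·r̂ = h·p² with h = i·v/2. -/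
/-- Contraction of the Cartesian quantum plane relation.  With a central
nilpotent contraction parameter `ε` (`ε² = 0`), `r = ε r̂` and `q = 1 + ε v`
(so `q = exp(ε v)`), the Cartesian quantum-plane relation
`(1 + q)(r p - p r) = i (q - 1)(r² + p²)` holds iff
`ε (2 (r̂ p - p r̂) - i v p²) = 0`; in particular it holds whenever `r̂, p`
satisfy the h-plane relation `[r̂, p] = h p²` with `h = i v / 2`. -/
theorem quantum_plane_contraction
    {A : Type*} [Ring A] [Algebra ℂ A] (v : ℂ) (ε p rhat : A)
    (hcentral : ∀ a : A, ε * a = a * ε) (hnil : ε * ε = 0)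
    (r q : A) (hr : r = ε * rhat) (hq : q = 1 + v • ε) :
    (((1 + q) * (r * p - p * r) = Complex.I • ((q - 1) * (r ^ 2 + p ^ 2))) ↔
      ε * ((2 : ℂ) • (rhat * p - p * rhat) - (Complex.I * v) • p ^ 2) = 0) ∧
    (rhat * p - p * rhat = (Complex.I * v / 2) • p ^ 2 →
      (1 + q) * (r * p - p * r) = Complex.I • ((q - 1) * (r ^ 2 + p ^ 2))) := by
  subst hr hq
  set X := rhat * p - p * rhat with hX
  have hcomm : ε * rhat * p - p * (ε * rhat) = ε * X := by
    rw [hX, mul_sub, mul_assoc, ← mul_assoc p ε rhat, ← hcentral p, mul_assoc]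
  have hr2 : (ε * rhat) ^ 2 = 0 := by
    rw [sq, mul_assoc, ← mul_assoc rhat ε rhat, ← hcentral rhat,
      mul_assoc, ← mul_assoc, hnil, zero_mul]
  have hεX : ε * (ε * X) = 0 := by rw [← mul_assoc, hnil, zero_mul]
  have hLHS : (1 + (1 + v • ε)) * (ε * rhat * p - p * (ε * rhat))
      = (2 : ℂ) • (ε * X) := by
    rw [hcomm]
    have : v • ε * (ε * X) = 0 := by rw [smul_mul_assoc, hεX, smul_zero]
    rw [add_mul, add_mul, one_mul, this, add_zero, two_smul]
  have hRHS : Complex.I • ((1 + v • ε - 1) * ((ε * rhat) ^ 2 + p ^ 2))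
      = (Complex.I * v) • (ε * p ^ 2) := by
    rw [hr2, zero_add, add_sub_cancel_left, smul_mul_assoc, smul_smul]
  have hdist : ε * ((2 : ℂ) • X - (Complex.I * v) • p ^ 2)
      = (2 : ℂ) • (ε * X) - (Complex.I * v) • (ε * p ^ 2) := by
    rw [mul_sub, mul_smul_comm, mul_smul_comm]
  constructor
  · rw [hLHS, hRHS, hdist, sub_eq_zero]
  · intro h
    rw [hLHS, hRHS]
    rw [h, mul_smul_comm, smul_smul]
    congr 1; ring
end

section
/- Let A be an associative ℂ-algebra, let q ∈ ℂ with q ≠ 0 and q² ≠ −1, and set λ = q − q⁻¹. Let a, b, c, d ∈ A, let T = [[a,b],[c,d]], and let R = [[q,0,0,0],[0,1,0,0],[0,λ,1,0],[0,0,0,−q⁻¹]]. If the RTT relation R·(T ⊗ I₂)·(I₂ ⊗ T) = (I₂ ⊗ T)·(T ⊗ I₂)·R holds (as 4×4 matrices over A, tensor product being the Kronecker product), then the generators satisfy the exotic quantum group relations: b² = 0, c² = 0, bc = cb, ac = qca, db = −qbd, dc = −qcd, and ad − da = λbc. -/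
open Matrix Kronecker

namespace Matrix

variable {m n o K A : Type*}

section Kronecker

variable [Fintype n] [DecidableEq n] [Semiring A] (T : Matrix n n A)

theorem kronecker_one_mul_one_kronecker_apply (p r : n × n) :
    ((T ⊗ₖ (1 : Matrix n n A)) * ((1 : Matrix n n A) ⊗ₖ T)) p r = T p.1 r.1 * T p.2 r.2 := by
  simp [mul_apply, Fintype.sum_prod_type, one_apply]

theorem one_kronecker_mul_kronecker_one_apply (p r : n × n) :
    (((1 : Matrix n n A) ⊗ₖ T) * (T ⊗ₖ (1 : Matrix n n A))) p r = T p.2 r.2 * T p.1 r.1 := by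
  simp [mul_apply, Fintype.sum_prod_type, one_apply]

end Kronecker

section AlgebraMap

variable [CommSemiring K] [Semiring A] [Algebra K A]

theorem map_algebraMap_mul_apply [Fintype n] (R : Matrix m n K) (M : Matrix n o A) (i : m) (k : o) :
    (R.map (algebraMap K A) * M) i k = ∑ j, R i j • M j k := by
  simp [mul_apply, Algebra.smul_def]

theorem mul_map_algebraMap_apply [Fintype n] (M : Matrix m n A) (R : Matrix n o K) (i : m) (k : o) :
    (M * R.map (algebraMap K A)) i k = ∑ j, R j k • M i j := by
  simp [mul_apply, Algebra.smul_def, Algebra.commutes]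

end AlgebraMap

theorem rtt_apply [Fintype n] [DecidableEq n] [CommSemiring K] [Semiring A] [Algebra K A]
    {R : Matrix (n × n) (n × n) K} {T : Matrix n n A}
    (h : R.map (algebraMap K A) * (T ⊗ₖ (1 : Matrix n n A)) * ((1 : Matrix n n A) ⊗ₖ T) =
      ((1 : Matrix n n A) ⊗ₖ T) * (T ⊗ₖ (1 : Matrix n n A)) * R.map (algebraMap K A))
    (x y : n × n) :
    ∑ p, R x p • (T p.1 y.1 * T p.2 y.2) = ∑ p, R p y • (T x.2 p.2 * T x.1 p.1) := by
  have hxy := congrFun₂ h x y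
  rw [Matrix.mul_assoc, map_algebraMap_mul_apply, mul_map_algebraMap_apply] at hxy
  simpa only [kronecker_one_mul_one_kronecker_apply, one_kronecker_mul_kronecker_one_apply] using hxy

end Matrix

theorem eq_zero_of_smul_eq_smul {K V : Type*} [DivisionRing K] [AddCommGroup V] [Module K V]
    {s t : K} (hst : s ≠ t) {x : V} (h : s • x = t • x) : x = 0 := by
  by_contra hx
  exact hst (smul_left_injective K hx h)

theorem ne_neg_inv_of_sq_ne_neg_one {K : Type*} [Field K] {q : K} (hq : q ≠ 0)
    (hq2 : q ^ 2 ≠ -1) : q ≠ -q⁻¹ := by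
  intro h
  apply hq2
  rw [sq]
  nth_rw 1 [h]
  rw [neg_mul, inv_mul_cancel₀ hq]

/-- If the RTT relation `R T₁ T₂ = T₂ T₁ R` holds for the exotic R-matrix
(ζ = -q⁻¹), then the generators satisfy the exotic quantum group
G̃L_q(2) relations. -/
theorem RTT_exotic_implies_relations
    {A : Type*} [Ring A] [Algebra ℂ A] (q : ℂ) (hq : q ≠ 0) (hq2 : q ^ 2 ≠ -1)
    (a b c d : A)
    (T : Matrix (Fin 2) (Fin 2) A) (hT : T = !![a, b; c, d])
    (hRTT : (Rmat q (-q⁻¹)).map (algebraMap ℂ A) *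
        (T ⊗ₖ (1 : Matrix (Fin 2) (Fin 2) A)) *
        ((1 : Matrix (Fin 2) (Fin 2) A) ⊗ₖ T) =
      ((1 : Matrix (Fin 2) (Fin 2) A) ⊗ₖ T) *
        (T ⊗ₖ (1 : Matrix (Fin 2) (Fin 2) A)) *
        (Rmat q (-q⁻¹)).map (algebraMap ℂ A)) :
    b * b = 0 ∧ c * c = 0 ∧ b * c = c * b ∧ a * c = q • (c * a) ∧
      d * b = (-q) • (b * d) ∧ d * c = (-q) • (c * d) ∧
      a * d - d * a = (q - q⁻¹) • (b * c) := by
  subst hT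
  have hbb : q • (b * b) = (-q⁻¹) • (b * b) := by
    simpa [Rmat, Fintype.sum_prod_type] using rtt_apply hRTT (0, 0) (1, 1)
  have hac : a * c = q • (c * a) := by
    simpa [Rmat, Fintype.sum_prod_type] using rtt_apply hRTT (0, 1) (0, 0)
  have hbc : b * c = c * b := by
    simpa [Rmat, Fintype.sum_prod_type] using rtt_apply hRTT (0, 1) (1, 0)
  have hbd : b * d = (-q)⁻¹ • (d * b) := by
    simpa [Rmat, Fintype.sum_prod_type] using rtt_apply hRTT (0, 1) (1, 1)
  have had : (q - q⁻¹) • (b * c) + d * a = a * d := by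
    simpa [Rmat, Fintype.sum_prod_type] using rtt_apply hRTT (1, 0) (1, 0)
  have hcc : q • (c * c) = (-q⁻¹) • (c * c) := by
    simpa [Rmat, Fintype.sum_prod_type, eq_comm] using rtt_apply hRTT (1, 1) (0, 0)
  have hdc : (-q)⁻¹ • (d * c) = c * d := by
    simpa [Rmat, Fintype.sum_prod_type] using rtt_apply hRTT (1, 1) (1, 0)
  have hq' : q ≠ -q⁻¹ := ne_neg_inv_of_sq_ne_neg_one hq hq2
  have hnq : -q ≠ 0 := neg_ne_zero.2 hq
  exact ⟨eq_zero_of_smul_eq_smul hq' hbb, eq_zero_of_smul_eq_smul hq' hcc, hbc, hac,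
    ((eq_inv_smul_iff₀ hnq).1 hbd).symm, (inv_smul_eq_iff₀ hnq).1 hdc, (eq_sub_of_add_eq had).symm⟩
end

section
/- Let A be an associative ℂ-algebra and h ∈ ℂ. Let s, t, u, w, p, r̂ ∈ A be such that each of s, t, u, w commutes with each of p and r̂, and suppose the GL_h(2) relations hold: sw = ws, ut − tu = h(s+w)(t+u), st − ts = us − su = hs(s−w), tw − wt = wu − uw = hw(s−w); suppose also the h-plane relation r̂p − pr̂ = h·p² holds. Then the co-acted generators p' = s·p and r̂' = u·p + w·r̂ again satisfy the h-plane relation: r̂'·p' − p'·r̂' = h·(p')². -/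
private lemma swap_mid {A : Type*} [Ring A] (a x b y : A) (hxb : x * b = b * x) :
    a * x * (b * y) = a * b * (x * y) := by
  rw [mul_assoc a x, ← mul_assoc x b, hxb, mul_assoc b x, ← mul_assoc, ← mul_assoc]

/-- The co-action of the quantum group GL_h(2) preserves the h-plane relation
`[r̂, p] = h p²`: if the GL_h(2) generators `s, t, u, w` commute with the plane
generators `p, r̂` and satisfy the GL_h(2) relations, and `r̂ p - p r̂ = h p²`,
then `p' = s p`, `r̂' = u p + w r̂` again satisfy `r̂' p' - p' r̂' = h p'²`. -/
theorem GLh2_coaction_preserves_h_plane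
    {A : Type*} [Ring A] [Algebra ℂ A] (h : ℂ) (s t u w p rhat : A)
    (hsp : s * p = p * s) (hsr : s * rhat = rhat * s)
    (htp : t * p = p * t) (htr : t * rhat = rhat * t)
    (hup : u * p = p * u) (hur : u * rhat = rhat * u)
    (hwp : w * p = p * w) (hwr : w * rhat = rhat * w)
    (hsw : s * w = w * s)
    (hut : u * t - t * u = h • ((s + w) * (t + u)))
    (hst : s * t - t * s = h • (s * (s - w)))
    (hus : u * s - s * u = h • (s * (s - w)))
    (htw : t * w - w * t = h • (w * (s - w)))
    (hwu : w * u - u * w = h • (w * (s - w)))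
    (hplane : rhat * p - p * rhat = h • (p * p)) :
    (u * p + w * rhat) * (s * p) - (s * p) * (u * p + w * rhat) =
      h • ((s * p) * (s * p)) := by
  have e1 : u * p * (s * p) = u * s * (p * p) := swap_mid u p s p hsp.symm
  have e2 : w * rhat * (s * p) = w * s * (rhat * p) := swap_mid w rhat s p hsr.symm
  have e3 : s * p * (u * p) = s * u * (p * p) := swap_mid s p u p hup.symm
  have e4 : s * p * (w * rhat) = s * w * (p * rhat) := swap_mid s p w rhat hwp.symm
  have e5 : s * p * (s * p) = s * s * (p * p) := swap_mid s p s p hsp.symm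
  calc (u * p + w * rhat) * (s * p) - (s * p) * (u * p + w * rhat)
      = (u * s - s * u) * (p * p) + w * s * (rhat * p - p * rhat) := by
        rw [add_mul, mul_add, e1, e2, e3, e4, hsw]; noncomm_ring
    _ = h • (s * (s - w)) * (p * p) + w * s * (h • (p * p)) := by rw [hus, hplane]
    _ = h • ((s * s - s * w + w * s) * (p * p)) := by
        rw [smul_mul_assoc, mul_smul_comm, ← smul_add]; congr 1; noncomm_ring
    _ = h • (s * p * (s * p)) := by rw [hsw, e5]; congr 1; noncomm_ring
end

section
/- Let A be an associative ℂ-algebra, let v ∈ ℂ with v ≠ 0, and set q = 1 + v. Let y, ξ, h ∈ A satisfy: h² = 0, h·y = y·h, h·ξ = −ξ·h. Define x = y + v⁻¹·h·ξ and θ = ξ + v⁻¹·h·y. If x·θ = q·θ·x and θ² = 0 (the quantum superplane C_q(1|1) relations), then y·ξ − ξ·y = h·y² + v·ξ·y and ξ² = −h·ξ·y. -/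
/-- Change of basis in the quantum superplane C_q(1|1).  With `q = 1 + v`,
an odd contraction parameter `h` (`h² = 0`, commuting with the even generator
`y` and anticommuting with the odd generator `ξ`), and `x = y + (h/v) ξ`,
`θ = ξ + (h/v) y`, the relations `x θ = q θ x`, `θ² = 0` imply
`[y, ξ] = h y² + v ξ y` and `ξ² = -h ξ y`. -/
theorem Cq11_change_of_basis
    {A : Type*} [Ring A] [Algebra ℂ A] (v : ℂ) (hv : v ≠ 0) (y ξ h : A)
    (hh2 : h * h = 0) (hhy : h * y = y * h) (hhxi : h * ξ = -(ξ * h))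
    (x θ : A) (hx : x = y + v⁻¹ • (h * ξ)) (hθ : θ = ξ + v⁻¹ • (h * y))
    (hrel1 : x * θ = (1 + v) • (θ * x)) (hrel2 : θ * θ = 0) :
    y * ξ - ξ * y = h * y ^ 2 + v • (ξ * y) ∧ ξ * ξ = -(h * (ξ * y)) := by
  have hξh : ξ * h = -(h * ξ) := by rw [hhxi, neg_neg]
  have e1 : ξ * (h * y) = -(h * (ξ * y)) := by
    rw [← mul_assoc, hξh, neg_mul, mul_assoc]
  have e2 : h * (y * (h * y)) = 0 := by
    calc h * (y * (h * y)) = h * (y * h) * y := by noncomm_ring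
    _ = h * (h * y) * y := by rw [← hhy]
    _ = 0 := by rw [← mul_assoc, hh2, zero_mul, zero_mul]
  have e3 : h * (ξ * (h * y)) = 0 := by
    rw [e1, mul_neg, ← mul_assoc, hh2, zero_mul, neg_zero]
  have e5 : y * (h * y) = h * (y * y) := by
    rw [← mul_assoc, ← hhy, mul_assoc]
  have e7 : h * (y * (h * ξ)) = 0 := by
    calc h * (y * (h * ξ)) = h * (y * h) * ξ := by noncomm_ring
    _ = h * (h * y) * ξ := by rw [← hhy]
    _ = 0 := by rw [← mul_assoc, hh2, zero_mul, zero_mul]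
  -- expand hrel2
  rw [hθ] at hrel2
  have s1 : ξ * ξ + v⁻¹ • (h * (y * ξ) - h * (ξ * y)) = 0 := by
    rw [← hrel2]
    simp only [add_mul, mul_add, smul_mul_assoc, mul_smul_comm, mul_assoc, e1, e2,
      smul_zero, add_zero, smul_sub, smul_neg]
    abel
  -- h * ξ² = 0
  have s2 : h * (ξ * ξ) = 0 := by
    have h0 := congrArg (fun z => h * z) s1
    simp only [mul_add, mul_zero, mul_smul_comm, mul_sub] at h0
    rw [← mul_assoc h h (ξ * y), ← mul_assoc h h (y * ξ), hh2] at h0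
    simpa using h0
  have e6 : ξ * (h * ξ) = 0 := by
    rw [← mul_assoc, hξh, neg_mul, mul_assoc, s2, neg_zero]
  -- expand hrel1
  rw [hx, hθ] at hrel1
  have s3 : y * ξ + v⁻¹ • (h * (y * y)) =
      ξ * y + v • (ξ * y) + v⁻¹ • (h * (y * y)) + h * (y * y) := by
    calc y * ξ + v⁻¹ • (h * (y * y))
        = (y + v⁻¹ • (h * ξ)) * (ξ + v⁻¹ • (h * y)) := by
          simp only [add_mul, mul_add, smul_mul_assoc, mul_smul_comm, mul_assoc,
            e5, s2, e3, smul_zero, add_zero]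
    _ = (1 + v) • ((ξ + v⁻¹ • (h * y)) * (y + v⁻¹ • (h * ξ))) := hrel1
    _ = (1 + v) • (ξ * y + v⁻¹ • (h * (y * y))) := by
          congr 1
          simp only [add_mul, mul_add, smul_mul_assoc, mul_smul_comm, mul_assoc,
            e6, e7, smul_zero, add_zero, zero_add]
    _ = ξ * y + v • (ξ * y) + v⁻¹ • (h * (y * y)) + h * (y * y) := by
          rw [smul_add, add_smul, add_smul, smul_smul, smul_smul, one_smul, one_mul,
            mul_inv_cancel₀ hv, one_smul]
          abel
  have main1 : y * ξ - ξ * y = h * (y * y) + v • (ξ * y) := by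
    have h1 : y * ξ = ξ * y + v • (ξ * y) + h * (y * y) := by
      have h2 := s3
      rw [add_right_comm (ξ * y + v • (ξ * y)) (v⁻¹ • (h * (y * y)))] at h2
      exact add_right_cancel h2
    rw [h1]; abel
  have main1' : y * ξ - ξ * y = h * y ^ 2 + v • (ξ * y) := by
    rw [pow_two]; exact main1
  refine ⟨main1', ?_⟩
  -- second relation
  have hyξ : y * ξ = ξ * y + (h * (y * y) + v • (ξ * y)) := by
    rw [← main1]; abel
  have s4 : h * (y * ξ) = h * (ξ * y) + v • (h * (ξ * y)) := by
    rw [hyξ, mul_add, mul_add, mul_smul_comm, ← mul_assoc h h, hh2, zero_mul,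
      zero_add]
  have s5 : ξ * ξ = -(v⁻¹ • (h * (y * ξ) - h * (ξ * y))) := by
    rw [eq_neg_iff_add_eq_zero]; exact s1
  rw [s5, s4]
  rw [show h * (ξ * y) + v • (h * (ξ * y)) - h * (ξ * y) = v • (h * (ξ * y)) by abel,
    smul_smul, inv_mul_cancel₀ hv, one_smul]
end

section
/- Let A be an associative ℂ-algebra, let v ∈ ℂ with v ≠ 0, and set q = 1 + v. Let t, ν, h ∈ A satisfy: h² = 0, h·t = t·h, h·ν = −ν·h, and ν² = 0. Define z = t + v⁻¹·h·ν and μ = ν + v⁻¹·h·t. If z·μ = q·μ·z (the exotic quantum graded plane relation), then t·ν − ν·t = h·t² + v·ν·t. -/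
/-- Change of basis in the exotic quantum graded plane C̃_q(1|1).  With
`q = 1 + v`, an odd contraction parameter `h` (`h² = 0`, commuting with the
even generator `t` and anticommuting with the odd generator `ν`, `ν² = 0`),
and `z = t + (h/v) ν`, `μ = ν + (h/v) t`, the relation `z μ = q μ z` implies
`[t, ν] = h t² + v ν t`. -/
theorem exotic_Cq11_change_of_basis
    {A : Type*} [Ring A] [Algebra ℂ A] (v : ℂ) (hv : v ≠ 0) (t ν h : A)
    (hh2 : h * h = 0) (hht : h * t = t * h) (hhν : h * ν = -(ν * h))
    (hν2 : ν * ν = 0)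
    (z μ : A) (hz : z = t + v⁻¹ • (h * ν)) (hμ : μ = ν + v⁻¹ • (h * t))
    (hrel : z * μ = (1 + v) • (μ * z)) :
    t * ν - ν * t = h * t ^ 2 + v • (ν * t) := by
  subst hz hμ
  have e1 : (h * ν) * ν = 0 := by rw [mul_assoc, hν2, mul_zero]
  have e2 : (h * ν) * (h * t) = 0 := by
    rw [← mul_assoc, mul_assoc h ν h, show ν * h = -(h * ν) by rw [hhν, neg_neg],
      mul_neg, ← mul_assoc, hh2, zero_mul, neg_zero, zero_mul]
  have e3 : ν * (h * ν) = 0 := by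
    rw [← mul_assoc, show ν * h = -(h * ν) by rw [hhν, neg_neg], neg_mul,
      mul_assoc, hν2, mul_zero, neg_zero]
  have e4 : (h * t) * (h * ν) = 0 := by
    rw [← mul_assoc, mul_assoc h t h, ← hht, ← mul_assoc, hh2, zero_mul, zero_mul]
  have e5 : t * (h * t) = h * t ^ 2 := by
    rw [← mul_assoc, ← hht, mul_assoc, ← pow_two]
  have e6 : (h * t) * t = h * t ^ 2 := by rw [mul_assoc, ← pow_two]
  have key : t * ν + v⁻¹ • (h * t ^ 2) =
      (1 + v) • (ν * t + v⁻¹ • (h * t ^ 2)) := by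
    calc t * ν + v⁻¹ • (h * t ^ 2)
        = (t + v⁻¹ • (h * ν)) * (ν + v⁻¹ • (h * t)) := by
          simp only [mul_add, add_mul, smul_mul_assoc, mul_smul_comm, smul_smul,
            e1, e2, e5, smul_zero, add_zero, zero_add]
      _ = (1 + v) • ((ν + v⁻¹ • (h * t)) * (t + v⁻¹ • (h * ν))) := hrel
      _ = (1 + v) • (ν * t + v⁻¹ • (h * t ^ 2)) := by
          congr 1
          simp only [mul_add, add_mul, smul_mul_assoc, mul_smul_comm, smul_smul,
            e3, e4, e6, smul_zero, add_zero, zero_add]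
  have key2 : t * ν + v⁻¹ • (h * t ^ 2) =
      ν * t + v • (ν * t) + v⁻¹ • (h * t ^ 2) + h * t ^ 2 := by
    rw [key, add_smul, one_smul, smul_add, smul_smul, mul_inv_cancel₀ hv, one_smul]
    abel
  have := key2
  rw [show t * ν + v⁻¹ • (h * t ^ 2) = v⁻¹ • (h * t ^ 2) + t * ν by abel] at this
  have h3 : t * ν = ν * t + v • (ν * t) + h * t ^ 2 := by
    have := congrArg (fun x => x - v⁻¹ • (h * t ^ 2)) key2
    linear_combination (norm := abel) this
  rw [h3]; abel
end

section
/- Let A be an associative ℂ-algebra and q ∈ ℂ. Let x, θ₁, θ₂ ∈ A satisfy the quantum superspace C_q(1|2) relations: x·θ₁ = q·θ₁·x, x·θ₂ = q·θ₂·x, θ₁·θ₂ = −q·θ₂·θ₁, θ₁² = 0, θ₂² = 0. Define the Cartesian generators ξ₁ = (θ₁ + θ₂)/√2 and ξ₂ = i·(θ₁ − θ₂)/√2 (equivalently θ₁ = (ξ₁ − iξ₂)/√2, θ₂ = (ξ₁ + iξ₂)/√2). Then: x·ξ₁ = q·ξ₁·x, x·ξ₂ = q·ξ₂·x, ξ₁·ξ₂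 + ξ₂·ξ₁ = 0, and (q+1)·ξ₁² = (q+1)·ξ₂² = i·(q−1)·ξ₁·ξ₂. -/
/-- The quantum superspace C_q(1|2) in the Cartesian basis.  If `x, θ₁, θ₂`
satisfy `x θₖ = q θₖ x`, `θ₁ θ₂ = -q θ₂ θ₁`, `θₖ² = 0`, then the Cartesian
generators `ξ₁ = (θ₁ + θ₂)/√2`, `ξ₂ = i (θ₁ - θ₂)/√2` satisfy
`x ξₖ = q ξₖ x`, `{ξ₁, ξ₂} = 0` and `(q+1) ξ₁² = (q+1) ξ₂² = i (q-1) ξ₁ ξ₂`. -/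
theorem Cq12_cartesian_basis
    {A : Type*} [Ring A] [Algebra ℂ A] (q : ℂ) (x θ₁ θ₂ : A)
    (h1 : x * θ₁ = q • (θ₁ * x)) (h2 : x * θ₂ = q • (θ₂ * x))
    (h3 : θ₁ * θ₂ = (-q) • (θ₂ * θ₁)) (h4 : θ₁ * θ₁ = 0) (h5 : θ₂ * θ₂ = 0)
    (ξ₁ ξ₂ : A)
    (hξ₁ : ξ₁ = ((Real.sqrt 2 : ℂ))⁻¹ • (θ₁ + θ₂))
    (hξ₂ : ξ₂ = (Complex.I / (Real.sqrt 2 : ℂ)) • (θ₁ - θ₂)) :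
    x * ξ₁ = q • (ξ₁ * x) ∧ x * ξ₂ = q • (ξ₂ * x) ∧
      ξ₁ * ξ₂ + ξ₂ * ξ₁ = 0 ∧
      (q + 1) • (ξ₁ * ξ₁) = (Complex.I * (q - 1)) • (ξ₁ * ξ₂) ∧
      (q + 1) • (ξ₂ * ξ₂) = (Complex.I * (q - 1)) • (ξ₁ * ξ₂) := by
  have h2ne : (Real.sqrt 2 : ℂ) ≠ 0 := by
    norm_num [Complex.ofReal_ne_zero, Real.sqrt_eq_zero']
  have hs : ((Real.sqrt 2 : ℂ))⁻¹ * ((Real.sqrt 2 : ℂ))⁻¹ = (2 : ℂ)⁻¹ := by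
    rw [← mul_inv]
    norm_cast
    rw [Real.mul_self_sqrt (by norm_num)]; norm_num
  subst hξ₁ hξ₂
  refine ⟨?_, ?_, ?_, ?_, ?_⟩ <;>
  · simp only [smul_mul_assoc, mul_smul_comm, smul_smul, mul_add, add_mul, sub_mul, mul_sub,
      smul_add, smul_sub, h1, h2, h3, h4, h5, smul_zero]
    match_scalars <;> field_simp <;> ring_nf <;>
      simp [Complex.I_sq, hs] <;> ring_nf
end

section
/- Let A be an associative ℂ-algebra and h ∈ ℂ. Let k, k', m, r, ξ₁, ξ₂ ∈ A be such that: k·k' = k'·k = 1; k and k' commute with ξ₁ and ξ₂; m and r commute with ξ₁ and ξ₂; the SL_h(1|2;ι) relations hold: rk − kr = km − mk = h(k² − 1), k'r − rk' = mk' − k'm = h(1 − k'²), rm − mr = h(k + k')(r + m); and the flag superplane relations hold: ξ₁ξ₂ + ξ₂ξ₁ = 0, ξ₁² = 0, ξ₂² = h·ξ₁·ξ₂. Then the co-acted generators ξ₁' = k·ξ₁ and ξ₂' = m·ξ₁ + k'·ξ₂ again satisfy the flag superplane relations: ξ₁'ξ₂' + ξ₂'ξ₁' = 0, (ξ₁')²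 = 0, and (ξ₂')² = h·ξ₁'·ξ₂'. -/
/-- The co-action of the quantum group SL_h(1|2;ι) preserves the flag
superplane relations `{ξ₁, ξ₂} = 0`, `ξ₁² = 0`, `ξ₂² = h ξ₁ ξ₂`: if the group
generators `k, k' (= k⁻¹), r, m` commute with the plane generators `ξ₁, ξ₂`
and satisfy the SL_h(1|2;ι) relations, then `ξ₁' = k ξ₁`,
`ξ₂' = m ξ₁ + k' ξ₂` again satisfy the flag superplane relations. -/
theorem SLh12_coaction_preserves_flag_superplane
    {A : Type*} [Ring A] [Algebra ℂ A] (h : ℂ) (k k' m r ξ₁ ξ₂ : A)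
    (hkk' : k * k' = 1) (hk'k : k' * k = 1)
    (hk1 : k * ξ₁ = ξ₁ * k) (hk2 : k * ξ₂ = ξ₂ * k)
    (hk'1 : k' * ξ₁ = ξ₁ * k') (hk'2 : k' * ξ₂ = ξ₂ * k')
    (hm1 : m * ξ₁ = ξ₁ * m) (hm2 : m * ξ₂ = ξ₂ * m)
    (hr1 : r * ξ₁ = ξ₁ * r) (hr2 : r * ξ₂ = ξ₂ * r)
    (hrk : r * k - k * r = h • (k * k - 1))
    (hkm : k * m - m * k = h • (k * k - 1))
    (hk'r : k' * r - r * k' = h • (1 - k' * k'))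
    (hmk' : m * k' - k' * m = h • (1 - k' * k'))
    (hrm : r * m - m * r = h • ((k + k') * (r + m)))
    (hs1 : ξ₁ * ξ₂ + ξ₂ * ξ₁ = 0) (hs2 : ξ₁ * ξ₁ = 0)
    (hs3 : ξ₂ * ξ₂ = h • (ξ₁ * ξ₂)) :
    (k * ξ₁) * (m * ξ₁ + k' * ξ₂) + (m * ξ₁ + k' * ξ₂) * (k * ξ₁) = 0 ∧
      (k * ξ₁) * (k * ξ₁) = 0 ∧
      (m * ξ₁ + k' * ξ₂) * (m * ξ₁ + k' * ξ₂) =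
        h • ((k * ξ₁) * (m * ξ₁ + k' * ξ₂)) := by
  have swap : ∀ g ξ : A, g * ξ = ξ * g → ∀ x : A, g * (ξ * x) = ξ * (g * x) := by
    intro g ξ hgξ x; rw [← mul_assoc, hgξ, mul_assoc]
  have ck1 := swap k ξ₁ hk1
  have ck2 := swap k ξ₂ hk2
  have ck'1 := swap k' ξ₁ hk'1
  have ck'2 := swap k' ξ₂ hk'2
  have cm1 := swap m ξ₁ hm1
  have cm2 := swap m ξ₂ hm2
  have a2 : ∀ x : A, ξ₁ * (ξ₁ * x) = 0 := by
    intro x; rw [← mul_assoc, hs2, zero_mul]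
  have a1 : ∀ x : A, ξ₂ * (ξ₁ * x) = -(ξ₁ * (ξ₂ * x)) := by
    intro x
    rw [← mul_assoc, eq_neg_of_add_eq_zero_right hs1, neg_mul, mul_assoc]
  have a3 : ∀ x : A, ξ₂ * (ξ₂ * x) = h • (ξ₁ * (ξ₂ * x)) := by
    intro x; rw [← mul_assoc, hs3, smul_mul_assoc, mul_assoc]
  have hmk'' : m * k' = h • (1 - k' * k') + k' * m := by
    rw [← hmk']; abel
  refine ⟨?_, ?_, ?_⟩ <;>
    (simp [mul_add, add_mul, mul_assoc, hk1, hk2, hk'1, hk'2, hm1, hm2,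
      ck1, ck2, ck'1, ck'2, cm1, cm2, a1, a2, a3,
      eq_neg_of_add_eq_zero_right hs1, hs2, hs3,
      hmk'', hkk', hk'k, smul_add, mul_smul_comm, smul_mul_assoc, smul_sub,
      mul_sub, sub_mul, mul_one, one_mul]; try abel)
end
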